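/- arXiv:1308.5187 — 3 statements merged into one kernel-verified Lean document; each statement's English description precedes it below -/
import Mathlib

section
/- Let Δ ⊂ G_{2m} be an open bounded set with (cl(Δ) − cl(Δ)) ∩ S = {0}, and let Δ₁,…,Δ_n ⊂ H_m be compact, pairwise disjoint sets with Δ₁+⋯+Δ_n ⊂ Δ. Then there exist pairwise disjoint open sets O₁,…,O_n ⊂ ℝ^{1+d} with Δ_i ⊂ O_i such that for all compact sets K₁,…,K_n ⊂ ℝ^{1+d} satisfying −K_i ⊂ O_i and (−K_i) ∩ S ⊂ Δ_i for each i, one has: (a) (cl(Δ) + K₁ + ⋯ + K_n) ∩ S ⊂ {0}; (b) −(K₁ + ⋯ + K_n) ⊂ Δ; (c) (Δ_i + K_i) ∩ S ⊂ {0} for each i. -/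
noncomputable section

open Set Filter
open scoped Pointwise

/-- Spacetime `ℝ^{1+d}`, with points `(E, p)`. -/
abbrev SpaceTime (d : ℕ) := ℝ × EuclideanSpace ℝ (Fin d)

/-- The mass hyperboloid `H_m`. -/
def massHyp (d : ℕ) (m : ℝ) : Set (SpaceTime d) :=
  {q | q.1 = Real.sqrt (‖q.2‖ ^ 2 + m ^ 2)}

/-- The region `G_{2m}`. -/
def Gmass (d : ℕ) (m : ℝ) : Set (SpaceTime d) :=
  {q | Real.sqrt (‖q.2‖ ^ 2 + 4 * m ^ 2) ≤ q.1}

/-- The set `S = {0} ∪ H_m ∪ G_{2m}`. -/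
def specSet (d : ℕ) (m : ℝ) : Set (SpaceTime d) :=
  {0} ∪ massHyp d m ∪ Gmass d m

/-!
Two points of the mass shell differ by a vector of Minkowski mass below `m` (reverse
Cauchy–Schwarz), so `Δᵢ - Δᵢ` is a compact set disjoint from the closed set `H_m ∪ G_{2m}`.
Likewise `∑ Δᵢ` is a compact subset of the open set `Δ`, and the `Δᵢ` are at positive distance
from each other. All these separations survive a small `ε`-thickening, and `Oᵢ` is the
`ε`-thickening of `Δᵢ`: then `Δᵢ + Kᵢ` lies in the `ε`-thickening of `Δᵢ - Δᵢ`, giving (c),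
and `-∑ Kᵢ` in the `nε`-thickening of `∑ Δᵢ`, giving (b); (a) follows from (b).
-/

open Function Metric Topology

section Pointwise

lemma isCompact_finsetSum {M ι : Type*} [AddCommMonoid M] [TopologicalSpace M] [ContinuousAdd M]
    (s : Finset ι) {A : ι → Set M} (hA : ∀ i ∈ s, IsCompact (A i)) :
    IsCompact (∑ i ∈ s, A i) := by
  classical
  induction s using Finset.induction_on with
  | empty => exact isCompact_singleton
  | insert i s hi ih =>
    rw [Finset.sum_insert hi]
    exact (hA i (s.mem_insert_self i)).add (ih fun j hj => hA j (Finset.mem_insert_of_mem hj))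

variable {E : Type*} [SeminormedAddCommGroup E]

lemma nsmul_ball_zero_subset_closedBall (ε : ℝ) (k : ℕ) :
    k • ball (0 : E) ε ⊆ closedBall 0 (k * ε) := by
  induction k with
  | zero => simp
  | succ k ih =>
    rw [succ_nsmul]
    rintro _ ⟨x, hx, y, hy, rfl⟩
    have hx' : ‖x‖ ≤ k * ε := mem_closedBall_zero_iff.1 (ih hx)
    rw [mem_ball_zero_iff] at hy
    refine mem_closedBall_zero_iff.2 ?_
    push_cast
    linarith [norm_add_le x y]

lemma sum_thickening_subset_cthickening {ι : Type*} (s : Finset ι) {A : ι → Set E}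
    (hA : ∀ i ∈ s, IsCompact (A i)) {ε : ℝ} (hε : 0 ≤ ε) :
    ∑ i ∈ s, thickening ε (A i) ⊆ cthickening (s.card * ε) (∑ i ∈ s, A i) := by
  simp_rw [← add_ball_zero]
  rw [Finset.sum_add_distrib, Finset.sum_const,
    ← (isCompact_finsetSum s hA).add_closedBall_zero (by positivity)]
  exact add_subset_add_left (nsmul_ball_zero_subset_closedBall ε _)

lemma add_subset_thickening_sub_self {A K : Set E} {ε : ℝ} (hK : -K ⊆ thickening ε A) :
    A + K ⊆ thickening ε (A - A) :=
  calc A + K ⊆ A - thickening ε A := by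
        rw [sub_eq_add_neg]; exact add_subset_add_left (neg_subset.1 hK)
    _ = thickening ε (A - A) := by rw [← add_ball_zero, sub_add_eq_sub_sub, sub_ball_zero]

end Pointwise

section Thickening

variable {X : Type*} [PseudoMetricSpace X]

lemma IsCompact.eventually_cthickening_subset {K U : Set X} (hK : IsCompact K) (hU : IsOpen U)
    (hKU : K ⊆ U) : ∀ᶠ δ in 𝓝 (0 : ℝ), cthickening δ K ⊆ U := by
  obtain ⟨δ₀, hδ₀, h⟩ := hK.exists_cthickening_subset_open hU hKU
  filter_upwards [Iio_mem_nhds hδ₀] with δ hδ using (cthickening_mono (le_of_lt hδ) K).trans h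

lemma Disjoint.eventually_thickenings {A B : Set X} (h : Disjoint A B) (hA : IsCompact A)
    (hB : IsClosed B) : ∀ᶠ ε in 𝓝 (0 : ℝ), Disjoint (thickening ε A) (thickening ε B) := by
  obtain ⟨δ, hδ, hd⟩ := h.exists_thickenings hA hB
  filter_upwards [Iio_mem_nhds hδ] with ε hε
  exact hd.mono (thickening_mono (le_of_lt hε) A) (thickening_mono (le_of_lt hε) B)

lemma eventually_pairwise_disjoint_thickening {ι Y : Type*} [Finite ι] [MetricSpace Y]
    {A : ι → Set Y} (hA : ∀ i, IsCompact (A i)) (h : Pairwise (Disjoint on A)) :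
    ∀ᶠ ε in 𝓝 (0 : ℝ), Pairwise (Disjoint on fun i => thickening ε (A i)) := by
  refine eventually_all.2 fun i => eventually_all.2 fun j => ?_
  by_cases hij : i = j
  · exact .of_forall fun _ h => absurd hij h
  · exact ((h hij).eventually_thickenings (hA i) (hA j).isClosed).mono fun _ h _ => h

end Thickening

section MassShell

variable {d : ℕ} {m : ℝ}

lemma isClosed_massHyp_union_Gmass : IsClosed (massHyp d m ∪ Gmass d m) :=
  (isClosed_eq continuous_fst (by fun_prop)).union (isClosed_le (by fun_prop) continuous_fst)

lemma specSet_eq_insert : specSet d m = insert 0 (massHyp d m ∪ Gmass d m) := by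
  rw [specSet, union_assoc, singleton_union]

lemma norm_sq_add_sq_le_of_mem_massHyp_union_Gmass {x : SpaceTime d}
    (hx : x ∈ massHyp d m ∪ Gmass d m) : ‖x.2‖ ^ 2 + m ^ 2 ≤ x.1 ^ 2 := by
  rcases hx with hx | hx
  · rw [show x.1 = _ from hx, Real.sq_sqrt (by positivity)]
  · have := (Real.sqrt_le_iff.1 hx).2
    nlinarith [sq_nonneg m]

lemma fst_sq_of_mem_massHyp {p : SpaceTime d} (hp : p ∈ massHyp d m) :
    p.1 ^ 2 = ‖p.2‖ ^ 2 + m ^ 2 := by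
  rw [show p.1 = _ from hp, Real.sq_sqrt (by positivity)]

lemma norm_mul_norm_add_sq_le_of_mem_massHyp {p q : SpaceTime d} (hp : p ∈ massHyp d m)
    (hq : q ∈ massHyp d m) : ‖p.2‖ * ‖q.2‖ + m ^ 2 ≤ p.1 * q.1 := by
  have hp0 : 0 ≤ p.1 := hp ▸ Real.sqrt_nonneg _
  have hq0 : 0 ≤ q.1 := hq ▸ Real.sqrt_nonneg _
  refine (pow_le_pow_iff_left₀ (by positivity) (by positivity) two_ne_zero).1 ?_
  rw [mul_pow, fst_sq_of_mem_massHyp hp, fst_sq_of_mem_massHyp hq]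
  nlinarith [sq_nonneg (‖p.2‖ - ‖q.2‖), sq_nonneg m]

lemma disjoint_massHyp_sub_massHyp (hm : m ≠ 0) :
    Disjoint (massHyp d m - massHyp d m) (massHyp d m ∪ Gmass d m) := by
  rw [Set.disjoint_left]
  rintro _ ⟨p, hp, q, hq, rfl⟩ hpq
  have hmass := norm_sq_add_sq_le_of_mem_massHyp_union_Gmass hpq
  have hrcs := norm_mul_norm_add_sq_le_of_mem_massHyp hp hq
  have hcs := real_inner_le_norm p.2 q.2
  have hm2 : 0 < m ^ 2 := by positivity
  simp only [Prod.fst_sub, Prod.snd_sub, norm_sub_sq_real] at hmass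
  nlinarith [fst_sq_of_mem_massHyp hp, fst_sq_of_mem_massHyp hq]

lemma eventually_cthickening_sub_self_subset_compl (hm : m ≠ 0) {A : Set (SpaceTime d)}
    (hA : IsCompact A) (hAH : A ⊆ massHyp d m) :
    ∀ᶠ ε in 𝓝 (0 : ℝ), cthickening ε (A - A) ⊆ (massHyp d m ∪ Gmass d m)ᶜ := by
  have hcompact : IsCompact (A - A) := by
    rw [sub_eq_add_neg]; exact hA.add hA.neg
  have hdisj := (disjoint_massHyp_sub_massHyp hm).mono_left (sub_subset_sub hAH hAH)
  exact hcompact.eventually_cthickening_subset isClosed_massHyp_union_Gmass.isOpen_compl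
    hdisj.subset_compl_right

end MassShell

theorem statement6_general (m : ℝ) (hm : 0 < m) (d : ℕ) (n : ℕ)
    (Δ : Set (SpaceTime d)) (hΔopen : IsOpen Δ)
    (hΔspec : (closure Δ - closure Δ) ∩ specSet d m = {0})
    (Δi : Fin n → Set (SpaceTime d))
    (hΔiH : ∀ i, Δi i ⊆ massHyp d m) (hΔic : ∀ i, IsCompact (Δi i))
    (hΔidisj : ∀ i j, i ≠ j → Disjoint (Δi i) (Δi j))
    (hΔisum : (∑ i : Fin n, Δi i) ⊆ Δ) :
    ∃ O : Fin n → Set (SpaceTime d),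
      (∀ i, IsOpen (O i)) ∧ (∀ i, Δi i ⊆ O i) ∧
      (∀ i j, i ≠ j → Disjoint (O i) (O j)) ∧
      ∀ K : Fin n → Set (SpaceTime d),
        (∀ i, IsCompact (K i)) → (∀ i, -K i ⊆ O i) →
        (∀ i, (-K i) ∩ specSet d m ⊆ Δi i) →
        (closure Δ + ∑ i : Fin n, K i) ∩ specSet d m ⊆ {0} ∧
        -(∑ i : Fin n, K i) ⊆ Δ ∧
        ∀ i, (Δi i + K i) ∩ specSet d m ⊆ {0} := by
  have hsep : ∀ᶠ ε in 𝓝 (0 : ℝ), ∀ i,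
      cthickening ε (Δi i - Δi i) ⊆ (massHyp d m ∪ Gmass d m)ᶜ :=
    eventually_all.2 fun i => eventually_cthickening_sub_self_subset_compl hm.ne' (hΔic i) (hΔiH i)
  have hpair := eventually_pairwise_disjoint_thickening hΔic fun i j => hΔidisj i j
  have hsum : ∀ᶠ ε in 𝓝 (0 : ℝ), cthickening (n * ε) (∑ i, Δi i) ⊆ Δ := by
    have := (isCompact_finsetSum _ fun i _ => hΔic i).eventually_cthickening_subset hΔopen hΔisum
    exact ((continuous_const_mul (n : ℝ)).tendsto' 0 0 (mul_zero _)).eventually this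
  obtain ⟨ε, hε, hsep, hpair, hsum⟩ :=
    ((eventually_mem_nhdsWithin : ∀ᶠ ε in 𝓝[>] (0 : ℝ), ε ∈ Ioi 0).and
      (nhdsWithin_le_nhds (hsep.and (hpair.and hsum)))).exists
  refine ⟨fun i => thickening ε (Δi i), fun i => isOpen_thickening,
    fun i => self_subset_thickening hε _, hpair, fun K _ hKO _ => ?_⟩
  have hb : -(∑ i, K i) ⊆ Δ :=
    calc -(∑ i, K i) = ∑ i, -K i := (Finset.sum_neg_distrib _).symm
      _ ⊆ ∑ i, thickening ε (Δi i) := finsetSum_subset_finsetSum _ _ _ fun i _ => hKO i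
      _ ⊆ cthickening (n * ε) (∑ i, Δi i) := by
        simpa using sum_thickening_subset_cthickening Finset.univ (fun i _ => hΔic i) hε.le
      _ ⊆ Δ := hsum
  refine ⟨?_, hb, fun i => ?_⟩
  · rintro _ ⟨⟨u, hu, v, hv, rfl⟩, hS⟩
    have : u + v ∈ (closure Δ - closure Δ) ∩ specSet d m :=
      ⟨⟨u, hu, -v, subset_closure (hb (neg_mem_neg.2 hv)), sub_neg_eq_add u v⟩, hS⟩
    rwa [hΔspec] at this
  · rintro x ⟨hx, hS⟩
    rw [specSet_eq_insert] at hS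
    exact hS.resolve_right (hsep i <| thickening_subset_cthickening _ _ <|
      add_subset_thickening_sub_self (hKO i) hx)

theorem statement6 (m : ℝ) (hm : 0 < m) (d : ℕ) (hd : 1 ≤ d) (n : ℕ) (hn : 1 ≤ n)
    (Δ : Set (SpaceTime d)) (hΔopen : IsOpen Δ) (hΔbd : Bornology.IsBounded Δ)
    (hΔG : Δ ⊆ Gmass d m)
    (hΔspec : (closure Δ - closure Δ) ∩ specSet d m = {0})
    (Δi : Fin n → Set (SpaceTime d))
    (hΔiH : ∀ i, Δi i ⊆ massHyp d m) (hΔic : ∀ i, IsCompact (Δi i))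
    (hΔidisj : ∀ i j, i ≠ j → Disjoint (Δi i) (Δi j))
    (hΔisum : (∑ i : Fin n, Δi i) ⊆ Δ) :
    ∃ O : Fin n → Set (SpaceTime d),
      (∀ i, IsOpen (O i)) ∧ (∀ i, Δi i ⊆ O i) ∧
      (∀ i j, i ≠ j → Disjoint (O i) (O j)) ∧
      ∀ K : Fin n → Set (SpaceTime d),
        (∀ i, IsCompact (K i)) → (∀ i, -K i ⊆ O i) →
        (∀ i, (-K i) ∩ specSet d m ⊆ Δi i) →
        (closure Δ + ∑ i : Fin n, K i) ∩ specSet d m ⊆ {0} ∧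
        -(∑ i : Fin n, K i) ⊆ Δ ∧
        ∀ i, (Δi i + K i) ∩ specSet d m ⊆ {0} :=
  statement6_general m hm d n Δ hΔopen hΔspec Δi hΔiH hΔic hΔidisj hΔisum
end
end

section
/- Suppose sup_{t≥0} ‖M(t)‖ < ∞ and the functions t ↦ ‖M(t)r(t)‖ and t ↦ ‖M(t)* r(t)‖ are integrable on [0,∞). Suppose there are strongly continuous maps C₁,…,C_n : [0,∞) → B(ℋ) such that |⟨u₁, DM(t) u₂⟩| ≤ Σ_{j=1}^n ‖C_j(t)u₁‖ ‖C_j(t)u₂‖ for all u₁, u₂ ∈ ℋ and t ≥ 0, and ∫_0^∞ ‖C_j(t)u(t)‖² dt < ∞ for each j. Then lim_{t→∞} ⟨u(t), M(t) u(t)⟩ exists. -/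
/-!
For `t > 0` the function `f t = ⟪u t, M t (u t)⟫` is differentiable with
`f' = ⟪u, DM u⟫ + ⟪r, M u⟫ + ⟪u, M r⟫`: writing `u' = r - i H u`, the terms containing `H`
cancel against those of the Heisenberg derivative. The first term is bounded by `∑ ‖C_j u‖²`
and the other two by `sup ‖u‖ · (‖M* r‖ + ‖M r‖)`, so `f'` is integrable on `(0, ∞)` and `f`
converges. Differentiating `f` needs `t ↦ ⟪x, M t y⟫` to be continuous for all `x, y`, not only
in `Dom H`; this follows by density from the uniform bound on `M`. Measurability of `f'` is
automatic, since it is a derivative.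
-/

noncomputable section

open MeasureTheory Set Filter Topology
open scoped InnerProductSpace

section OperatorFamilies

variable {𝕜 𝕜₂ E F : Type*} [NontriviallyNormedField 𝕜] [NontriviallyNormedField 𝕜₂]
  {σ : 𝕜 →+* 𝕜₂} [RingHomIsometric σ] [NormedAddCommGroup E] [NormedSpace 𝕜 E]
  [NormedAddCommGroup F] [NormedSpace 𝕜₂ F]

theorem eventually_norm_clm_apply_le {ι : Type*} {l : Filter ι} {N : ι → E →SL[σ] F}
    {K : ℝ} {v : ι → E} {x : E} (hK : ∀ᶠ i in l, ‖N i‖ ≤ K) (hv : Tendsto v l (𝓝 x)) :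
    ∀ᶠ i in l, ‖N i (v i)‖ ≤ K * (‖x‖ + 1) := by
  filter_upwards [hK, hv.norm.eventually (ge_mem_nhds (lt_add_one ‖x‖))] with i hNi hvi
  exact (N i).le_of_opNorm_le_of_le hNi hvi

theorem tendsto_clm_apply_of_tendsto {ι : Type*} {l : Filter ι} {N : ι → E →SL[σ] F}
    {K : ℝ} {v : ι → E} {x : E} {y : F} (hK : ∀ᶠ i in l, ‖N i‖ ≤ K)
    (hv : Tendsto v l (𝓝 x)) (hN : Tendsto (fun i => N i x) l (𝓝 y)) :
    Tendsto (fun i => N i (v i)) l (𝓝 y) := by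
  have hsmall : Tendsto (fun i => N i (v i - x)) l (𝓝 0) := by
    refine squeeze_zero_norm' ?_ (by simpa using (tendsto_sub_nhds_zero_iff.2 hv).norm.const_mul K)
    filter_upwards [hK] with i hi
    exact (N i).le_of_opNorm_le hi _
  simpa using hsmall.add hN

theorem continuousOn_clm_apply_of_dense {X : Type*} [TopologicalSpace X] {S : Set X}
    {N : X → E →SL[σ] F} {K : ℝ} {D : Set E} (hD : Dense D) (hK : ∀ s ∈ S, ‖N s‖ ≤ K)
    (hN : ∀ x ∈ D, ContinuousOn (fun s => N s x) S) (x : E) :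
    ContinuousOn (fun s => N s x) S := by
  obtain ⟨xs, hxsD, hxs⟩ := mem_closure_iff_seq_limit.mp (hD x)
  refine TendstoUniformlyOn.continuousOn (F := fun n s => N s (xs n)) (p := atTop) ?_
    (Eventually.of_forall fun n => hN _ (hxsD n)).frequently
  have hgap : Tendsto (fun n => K * ‖x - xs n‖) atTop (𝓝 0) := by
    simpa using ((tendsto_const_nhds (x := x)).sub hxs).norm.const_mul K
  rw [Metric.tendstoUniformlyOn_iff]
  intro ε hε
  filter_upwards [hgap.eventually (gt_mem_nhds hε)] with n hn s hs
  rw [dist_eq_norm, ← map_sub]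
  exact ((N s).le_of_opNorm_le (hK s hs) _).trans_lt hn

theorem IsCompact.exists_forall_norm_le_of_continuousOn_apply [CompleteSpace E]
    {X : Type*} [TopologicalSpace X] {S : Set X} (hS : IsCompact S) {N : X → E →SL[σ] F}
    (hN : ∀ x, ContinuousOn (fun s => N s x) S) : ∃ C, ∀ s ∈ S, ‖N s‖ ≤ C := by
  obtain ⟨C, hC⟩ := banach_steinhaus (g := fun s : S => N s) fun x => by
    obtain ⟨C, hC⟩ := hS.exists_bound_of_continuousOn (hN x)
    exact ⟨C, fun s => hC s s.2⟩
  exact ⟨C, fun s hs => hC ⟨s, hs⟩⟩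

theorem ContinuousOn.clm_apply_of_continuousOn_apply_Ici [CompleteSpace E]
    {N : ℝ → E →SL[σ] F} {v : ℝ → E} {a : ℝ} (hv : ContinuousOn v (Ici a))
    (hN : ∀ x, ContinuousOn (fun s => N s x) (Ici a)) :
    ContinuousOn (fun s => N s (v s)) (Ici a) := by
  intro t ht
  obtain ⟨C, hC⟩ :=
    (isCompact_Icc (a := a) (b := t + 1)).exists_forall_norm_le_of_continuousOn_apply fun x => (hN x).mono Icc_subset_Ici_self
  have hnear : ∀ᶠ s in 𝓝[Ici a] t, ‖N s‖ ≤ C := by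
    filter_upwards [inter_mem_nhdsWithin (Ici a) (Iic_mem_nhds (lt_add_one t))] with s hs
    exact hC s hs
  exact tendsto_clm_apply_of_tendsto hnear (hv t ht) (hN (v t) t ht)

end OperatorFamilies

section InnerProduct

variable {ℋ : Type*} [NormedAddCommGroup ℋ] [InnerProductSpace ℂ ℋ]

theorem norm_innerSLFlip_le (y : ℋ) : ‖innerSLFlip ℂ y‖ ≤ ‖y‖ :=
  ContinuousLinearMap.opNorm_le_bound _ (norm_nonneg y) fun x => by
    rw [innerSLFlip_apply_apply, mul_comm]
    exact norm_inner_le_norm x y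

theorem norm_innerSL_comp_le (x : ℋ) (N : ℋ →L[ℂ] ℋ) :
    ‖(innerSL ℂ x).comp N‖ ≤ ‖x‖ * ‖N‖ :=
  (ContinuousLinearMap.opNorm_comp_le _ _).trans_eq (by rw [innerSL_apply_norm])

theorem continuousOn_inner_clm_apply_of_dense {X : Type*} [TopologicalSpace X] {S : Set X}
    {N : X → ℋ →L[ℂ] ℋ} {K : ℝ} {D : Set ℋ} (hD : Dense D) (hK : ∀ s ∈ S, ‖N s‖ ≤ K)
    (hN : ∀ x ∈ D, ∀ y ∈ D, ContinuousOn (fun s => ⟪x, N s y⟫_ℂ) S) (x y : ℋ) :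
    ContinuousOn (fun s => ⟪x, N s y⟫_ℂ) S := by
  have hleft : ∀ y ∈ D, ∀ x, ContinuousOn (fun s => ⟪x, N s y⟫_ℂ) S := fun y hy =>
    continuousOn_clm_apply_of_dense (N := fun s => innerSLFlip ℂ (N s y)) hD
      (fun s hs => (norm_innerSLFlip_le _).trans ((N s).le_of_opNorm_le (hK s hs) y))
      fun x hx => hN x hx y hy
  exact continuousOn_clm_apply_of_dense (N := fun s => (innerSL ℂ x).comp (N s)) hD
    (fun s hs => (norm_innerSL_comp_le x (N s)).trans
      (mul_le_mul_of_nonneg_left (hK s hs) (norm_nonneg x)))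
    (fun y hy => hleft y hy x) y

theorem tendsto_inner_clm_apply {ι : Type*} {l : Filter ι} {N : ι → ℋ →L[ℂ] ℋ}
    {N₀ : ℋ →L[ℂ] ℋ} {K : ℝ} {v w : ι → ℋ} {x y : ℋ}
    (hN : ∀ z, Tendsto (fun i => ⟪z, N i y⟫_ℂ) l (𝓝 ⟪z, N₀ y⟫_ℂ))
    (hK : ∀ᶠ i in l, ‖N i‖ ≤ K) (hv : Tendsto v l (𝓝 x)) (hw : Tendsto w l (𝓝 y)) :
    Tendsto (fun i => ⟪v i, N i (w i)⟫_ℂ) l (𝓝 ⟪x, N₀ y⟫_ℂ) := by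
  have hright : ∀ z, Tendsto (fun i => ⟪z, N i (w i)⟫_ℂ) l (𝓝 ⟪z, N₀ y⟫_ℂ) :=
    fun z => tendsto_clm_apply_of_tendsto (N := fun i => (innerSL ℂ z).comp (N i))
      (hK.mono fun i hi => (norm_innerSL_comp_le z (N i)).trans
        (mul_le_mul_of_nonneg_left hi (norm_nonneg z))) hw (hN z)
  exact tendsto_clm_apply_of_tendsto (N := fun i => innerSLFlip ℂ (N i (w i)))
    ((eventually_norm_clm_apply_le hK hw).mono fun i hi => (norm_innerSLFlip_le _).trans hi)
    hv (hright x)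

theorem HasDerivAt.inner_left_of_eq_zero {a c : ℝ → ℋ} {a' : ℋ} {t B : ℝ}
    (ha : HasDerivAt a a' t) (ha0 : a t = 0)
    (hc : Tendsto (fun s => ⟪a', c s⟫_ℂ) (𝓝 t) (𝓝 ⟪a', c t⟫_ℂ))
    (hcB : ∀ᶠ s in 𝓝 t, ‖c s‖ ≤ B) :
    HasDerivAt (fun s => ⟪a s, c s⟫_ℂ) ⟪a', c t⟫_ℂ t := by
  rw [hasDerivAt_iff_tendsto_slope] at ha ⊢
  have hslope : slope (fun s => ⟪a s, c s⟫_ℂ) t = fun s => innerSLFlip ℂ (c s) (slope a t s) := by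
    funext s
    simp [slope_def_module, ha0, inner_smul_left_eq_star_smul]
  rw [hslope]
  exact tendsto_clm_apply_of_tendsto (N := fun s => innerSLFlip ℂ (c s))
    ((eventually_nhdsWithin_of_eventually_nhds hcB).mono fun s hs =>
      (norm_innerSLFlip_le _).trans hs)
    ha (hc.mono_left nhdsWithin_le_nhds)

theorem HasDerivAt.inner_clm_apply_right_of_eq_zero {b : ℝ → ℋ} {N : ℝ → ℋ →L[ℂ] ℋ}
    {x b' : ℋ} {t K : ℝ} (hb : HasDerivAt b b' t) (hb0 : b t = 0)
    (hN : Tendsto (fun s => ⟪x, N s b'⟫_ℂ) (𝓝 t) (𝓝 ⟪x, N t b'⟫_ℂ))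
    (hK : ∀ᶠ s in 𝓝 t, ‖N s‖ ≤ K) :
    HasDerivAt (fun s => ⟪x, N s (b s)⟫_ℂ) ⟪x, N t b'⟫_ℂ t := by
  rw [hasDerivAt_iff_tendsto_slope] at hb ⊢
  have hslope : slope (fun s => ⟪x, N s (b s)⟫_ℂ) t =
      fun s => (innerSL ℂ x).comp (N s) (slope b t s) := by
    funext s
    simp [slope_def_module, hb0]
  rw [hslope]
  exact tendsto_clm_apply_of_tendsto (N := fun s => (innerSL ℂ x).comp (N s))
    ((eventually_nhdsWithin_of_eventually_nhds hK).mono fun s hs =>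
      (norm_innerSL_comp_le x (N s)).trans (mul_le_mul_of_nonneg_left hs (norm_nonneg x)))
    hb (hN.mono_left nhdsWithin_le_nhds)

theorem HasDerivAt.inner_clm_apply_self {u : ℝ → ℋ} {M : ℝ → ℋ →L[ℂ] ℋ} {u' : ℋ} {m : ℂ}
    {t K : ℝ} (hu : HasDerivAt u u' t) (hM : HasDerivAt (fun s => ⟪u t, M s (u t)⟫_ℂ) m t)
    (hMw : ∀ x y, Tendsto (fun s => ⟪x, M s y⟫_ℂ) (𝓝 t) (𝓝 ⟪x, M t y⟫_ℂ))
    (hK : ∀ᶠ s in 𝓝 t, ‖M s‖ ≤ K) :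
    HasDerivAt (fun s => ⟪u s, M s (u s)⟫_ℂ) (⟪u', M t (u t)⟫_ℂ + ⟪u t, M t u'⟫_ℂ + m) t := by
  have hsplit : (fun s => ⟪u s, M s (u s)⟫_ℂ) = fun s =>
      ⟪u s - u t, M s (u s)⟫_ℂ + ⟪u t, M s (u s - u t)⟫_ℂ + ⟪u t, M s (u t)⟫_ℂ := by
    funext s
    simp only [map_sub, inner_sub_left, inner_sub_right]
    ring
  -- Only the last summand sees the derivative of `M`; in the other two one factor vanishes at
  -- `t`, so weak continuity of `M` suffices.
  rw [hsplit]
  refine ((HasDerivAt.add ?_ ?_).add hM)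
  · exact (hu.sub_const (u t)).inner_left_of_eq_zero (sub_self _)
      (tendsto_inner_clm_apply (hMw · (u t)) hK tendsto_const_nhds hu.continuousAt)
      (eventually_norm_clm_apply_le hK hu.continuousAt)
  · exact (hu.sub_const (u t)).inner_clm_apply_right_of_eq_zero (sub_self _) (hMw _ _) hK

theorem HasDerivAt.inner_clm_apply_self_of_heisenberg {u : ℝ → ℋ} {M : ℝ → ℋ →L[ℂ] ℋ}
    {D : ℋ →L[ℂ] ℋ} {r y : ℋ} {t K : ℝ} (hu : HasDerivAt u (r - Complex.I • y) t)
    (hM : HasDerivAt (fun s => ⟪u t, M s (u t)⟫_ℂ)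
      (⟪u t, D (u t)⟫_ℂ - Complex.I * ⟪y, M t (u t)⟫_ℂ + Complex.I * ⟪u t, M t y⟫_ℂ) t)
    (hMw : ∀ x y, Tendsto (fun s => ⟪x, M s y⟫_ℂ) (𝓝 t) (𝓝 ⟪x, M t y⟫_ℂ))
    (hK : ∀ᶠ s in 𝓝 t, ‖M s‖ ≤ K) :
    HasDerivAt (fun s => ⟪u s, M s (u s)⟫_ℂ)
      (⟪u t, D (u t)⟫_ℂ + ⟪r, M t (u t)⟫_ℂ + ⟪u t, M t r⟫_ℂ) t := by
  convert hu.inner_clm_apply_self hM hMw hK using 1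
  simp only [map_sub, map_smul, inner_sub_left, inner_sub_right, inner_smul_left,
    inner_smul_right, Complex.conj_I]
  ring

variable [CompleteSpace ℋ]

theorem norm_add_inner_add_inner_le (A : ℋ →L[ℂ] ℋ) {w : ℂ} {b c : ℝ} {x : ℋ}
    (hw : ‖w‖ ≤ b) (hx : ‖x‖ ≤ c) (z : ℋ) :
    ‖w + ⟪z, A x⟫_ℂ + ⟪x, A z⟫_ℂ‖ ≤ b + c * ‖A.adjoint z‖ + c * ‖A z‖ := by
  have hleft : ‖⟪z, A x⟫_ℂ‖ ≤ c * ‖A.adjoint z‖ := by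
    rw [← ContinuousLinearMap.adjoint_inner_left, mul_comm]
    exact (norm_inner_le_norm _ _).trans (by gcongr)
  have hright : ‖⟪x, A z⟫_ℂ‖ ≤ c * ‖A z‖ := (norm_inner_le_norm _ _).trans (by gcongr)
  exact norm_add₃_le.trans (by gcongr)

end InnerProduct

theorem integrableOn_of_hasDerivAt_of_norm_le {F : Type*} [NormedAddCommGroup F]
    [NormedSpace ℝ F] [CompleteSpace F] {f f' : ℝ → F} {g : ℝ → ℝ} {s : Set ℝ}
    (hs : MeasurableSet s) (hf : ∀ t ∈ s, HasDerivAt f (f' t) t) (hg : IntegrableOn g s)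
    (hle : ∀ t ∈ s, ‖f' t‖ ≤ g t) : IntegrableOn f' s := by
  refine Integrable.mono' hg ?_ ((ae_restrict_iff' hs).2 (ae_of_all _ hle))
  refine (stronglyMeasurable_deriv f).aestronglyMeasurable.congr ?_
  filter_upwards [ae_restrict_mem hs] with t ht
  exact (hf t ht).deriv

theorem statement8_general {ℋ : Type*} [NormedAddCommGroup ℋ] [InnerProductSpace ℂ ℋ]
    [CompleteSpace ℋ]
    (T : ℋ →ₗ.[ℂ] ℋ) (hdense : Dense (T.domain : Set ℋ))
    (u u' : ℝ → ℋ)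
    (hud : ∀ t : ℝ, u t ∈ T.domain)
    (hu : ∀ t ∈ Set.Ici (0:ℝ), HasDerivWithinAt u (u' t) (Set.Ici 0) t)
    (hubdd : ∃ C : ℝ, ∀ t : ℝ, 0 ≤ t → ‖u t‖ ≤ C)
    (r : ℝ → ℋ) (hr : ∀ t : ℝ, r t = u' t + Complex.I • T ⟨u t, hud t⟩)
    (M DM : ℝ → (ℋ →L[ℂ] ℋ))
    (hM : ∀ (x y : T.domain), ∀ t ∈ Set.Ici (0:ℝ),
      HasDerivWithinAt (fun s => (inner ℂ (x : ℋ) (M s (y : ℋ)) : ℂ))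
        ((inner ℂ (x : ℋ) (DM t (y : ℋ)) : ℂ)
          - Complex.I * (inner ℂ (T x) (M t (y : ℋ)) : ℂ)
          + Complex.I * (inner ℂ (x : ℋ) (M t (T y)) : ℂ)) (Set.Ici 0) t)
    (hMbd : ∃ C : ℝ, ∀ t : ℝ, 0 ≤ t → ‖M t‖ ≤ C)
    (hMr : IntegrableOn (fun t => ‖M t (r t)‖) (Set.Ici (0:ℝ)))
    (hMadjr : IntegrableOn
      (fun t => ‖ContinuousLinearMap.adjoint (M t) (r t)‖) (Set.Ici (0:ℝ)))
    (nn : ℕ) (C : Fin nn → ℝ → (ℋ →L[ℂ] ℋ))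
    (hCc : ∀ (j : Fin nn) (x : ℋ), ContinuousOn (fun t => C j t x) (Set.Ici 0))
    (hbil : ∀ (u₁ u₂ : ℋ) (t : ℝ), 0 ≤ t →
      ‖(inner ℂ u₁ (DM t u₂) : ℂ)‖ ≤ ∑ j : Fin nn, ‖C j t u₁‖ * ‖C j t u₂‖)
    (hCint : ∀ j : Fin nn,
      ∫⁻ t in Set.Ici (0:ℝ), ENNReal.ofReal (‖C j t (u t)‖ ^ 2) < ⊤) :
    ∃ L : ℂ, Filter.Tendsto (fun t : ℝ => (inner ℂ (u t) (M t (u t)) : ℂ))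
      Filter.atTop (nhds L) := by
  obtain ⟨Cu, hCu⟩ := hubdd
  obtain ⟨CM, hCM⟩ := hMbd
  have hMw : ∀ x y : ℋ, ContinuousOn (fun s => ⟪x, M s y⟫_ℂ) (Ioi 0) :=
    continuousOn_inner_clm_apply_of_dense hdense (fun s hs => hCM s (le_of_lt hs))
      fun x hx y hy s hs => (hM ⟨x, hx⟩ ⟨y, hy⟩ s (Ioi_subset_Ici_self hs)).continuousWithinAt.mono
        Ioi_subset_Ici_self
  set φ : ℝ → ℂ := fun s => ⟪u s, DM s (u s)⟫_ℂ + ⟪r s, M s (u s)⟫_ℂ + ⟪u s, M s (r s)⟫_ℂ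
  have hderiv : ∀ t ∈ Ioi (0:ℝ), HasDerivAt (fun s => ⟪u s, M s (u s)⟫_ℂ) (φ t) t := by
    intro t ht
    have ht' : t ∈ Ici (0:ℝ) := Ioi_subset_Ici_self ht
    have hu' : u' t = r t - Complex.I • T ⟨u t, hud t⟩ := eq_sub_of_add_eq (hr t).symm
    exact (hu' ▸ (hu t ht').hasDerivAt (Ici_mem_nhds ht)).inner_clm_apply_self_of_heisenberg
      ((hM ⟨u t, hud t⟩ ⟨u t, hud t⟩ t ht').hasDerivAt (Ici_mem_nhds ht))
      (fun x y => (hMw x y).continuousAt (Ioi_mem_nhds ht))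
      (eventually_of_mem (Ioi_mem_nhds ht) fun s hs => hCM s (le_of_lt hs))
  have hCu_sq : ∀ j, IntegrableOn (fun t => ‖C j t (u t)‖ ^ 2) (Ici 0) := fun j =>
    ⟨((ContinuousOn.clm_apply_of_continuousOn_apply_Ici
        (fun t ht => (hu t ht).continuousWithinAt) (hCc j)).aestronglyMeasurable
        measurableSet_Ici).norm.pow 2,
      (hasFiniteIntegral_iff_ofReal (ae_of_all _ fun t => by positivity)).2 (hCint j)⟩
  have hφ : IntegrableOn φ (Ioi 0) :=
    integrableOn_of_hasDerivAt_of_norm_le measurableSet_Ioi hderiv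
      (IntegrableOn.mono_set (((integrable_finsetSum _ fun j _ => hCu_sq j).add
        (hMadjr.const_mul Cu)).add (hMr.const_mul Cu)) Ioi_subset_Ici_self)
      fun t ht => norm_add_inner_add_inner_le (M t)
        (by simpa only [← sq] using hbil (u t) (u t) t ht.le) (hCu t ht.le) (r t)
  exact ⟨_, tendsto_limUnder_of_hasDerivAt_of_integrableOn_Ioi hderiv hφ⟩

theorem statement8 {ℋ : Type*} [NormedAddCommGroup ℋ] [InnerProductSpace ℂ ℋ]
    [CompleteSpace ℋ]
    (T : ℋ →ₗ.[ℂ] ℋ) (hdense : Dense (T.domain : Set ℋ)) (hsa : IsSelfAdjoint T)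
    (u u' : ℝ → ℋ)
    (hud : ∀ t : ℝ, u t ∈ T.domain)
    (hu : ∀ t ∈ Set.Ici (0:ℝ), HasDerivWithinAt u (u' t) (Set.Ici 0) t)
    (hu'c : ContinuousOn u' (Set.Ici 0))
    (hubdd : ∃ C : ℝ, ∀ t : ℝ, 0 ≤ t → ‖u t‖ ≤ C)
    (hTuc : ContinuousOn (fun t => T ⟨u t, hud t⟩) (Set.Ici 0))
    (r : ℝ → ℋ) (hr : ∀ t : ℝ, r t = u' t + Complex.I • T ⟨u t, hud t⟩)
    (M DM : ℝ → (ℋ →L[ℂ] ℋ))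
    (hDMc : ∀ x : ℋ, ContinuousOn (fun t => DM t x) (Set.Ici 0))
    (hDMloc : ∀ b : ℝ, ∃ C : ℝ, ∀ t ∈ Set.Icc (0:ℝ) b, ‖DM t‖ ≤ C)
    (hM : ∀ (x y : T.domain), ∀ t ∈ Set.Ici (0:ℝ),
      HasDerivWithinAt (fun s => (inner ℂ (x : ℋ) (M s (y : ℋ)) : ℂ))
        ((inner ℂ (x : ℋ) (DM t (y : ℋ)) : ℂ)
          - Complex.I * (inner ℂ (T x) (M t (y : ℋ)) : ℂ)
          + Complex.I * (inner ℂ (x : ℋ) (M t (T y)) : ℂ)) (Set.Ici 0) t)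
    (hMbd : ∃ C : ℝ, ∀ t : ℝ, 0 ≤ t → ‖M t‖ ≤ C)
    (hMr : IntegrableOn (fun t => ‖M t (r t)‖) (Set.Ici (0:ℝ)))
    (hMadjr : IntegrableOn
      (fun t => ‖ContinuousLinearMap.adjoint (M t) (r t)‖) (Set.Ici (0:ℝ)))
    (nn : ℕ) (C : Fin nn → ℝ → (ℋ →L[ℂ] ℋ))
    (hCc : ∀ (j : Fin nn) (x : ℋ), ContinuousOn (fun t => C j t x) (Set.Ici 0))
    (hbil : ∀ (u₁ u₂ : ℋ) (t : ℝ), 0 ≤ t →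
      ‖(inner ℂ u₁ (DM t u₂) : ℂ)‖ ≤ ∑ j : Fin nn, ‖C j t u₁‖ * ‖C j t u₂‖)
    (hCint : ∀ j : Fin nn,
      ∫⁻ t in Set.Ici (0:ℝ), ENNReal.ofReal (‖C j t (u t)‖ ^ 2) < ⊤) :
    ∃ L : ℂ, Filter.Tendsto (fun t : ℝ => (inner ℂ (u t) (M t (u t)) : ℂ))
      Filter.atTop (nhds L) :=
  statement8_general T hdense u u' hud hu hubdd r hr M DM hM hMbd hMr hMadjr nn C hCc hbil hCint
end
end

section
/- Let K ⊂ ℝ^{nd} be compact and ε > 0 with K + B̃(0,ε) ⊂ B̃(0,1) ∖ D₀, and let λ > 0 satisfy √2·ε(1+λ) < 2(ε−λ). Let χ ∈ C^∞(ℝ) satisfy χ(s) = 1 for s ≤ −1, χ(s) = 0 for s ≥ (1+λ)², χ'(s) ≤ 0 for all s, and χ'(s) ≤ −1/2 for 0 ≤ s ≤ 1; let χ₁ ∈ C_0^∞(ℝ^{nd}) satisfy 0 ≤ χ₁ ≤ 1, χ₁ = 1 on K, and supp χ₁ ⊂ K + B̃(0,λ). Define M(x,ξ) := χ(ε^{−2}|x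 − ∇ω̃(ξ)|²) χ₁(∇ω̃(ξ)) and dM(x,ξ) := −(x − ∇ω̃(ξ))·∇_x M(x,ξ). Then: (a) there exists c > 0 such that dM(x,ξ) ≥ c·1_{B(0,ε)}(x − ∇ω̃(ξ))·1_K(∇ω̃(ξ))·|x − ∇ω̃(ξ)|² for all (x,ξ) ∈ ℝ^{nd}×ℝ^{nd}; (b) π_x(supp M) ∩ D₀ = ∅, where π_x(supp M) := {x : (x,ξ) ∈ supp M for some ξ}. -/
noncomputable section

open Set
open scoped Pointwise

abbrev Vec (κ : Type*) [Fintype κ] := EuclideanSpace ℝ κ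

abbrev Pt (n d : ℕ) := Vec (Fin n × Fin d)

def blk {n d : ℕ} (x : Pt n d) (i : Fin n) : Vec (Fin d) :=
  (WithLp.equiv 2 (Fin d → ℝ)).symm fun a => x (i, a)

def omega1 {d : ℕ} (m : ℝ) (p : Vec (Fin d)) : ℝ := Real.sqrt (‖p‖ ^ 2 + m ^ 2)

def omegaT {n d : ℕ} (m : ℝ) (ξ : Pt n d) : ℝ := ∑ i : Fin n, omega1 m (blk ξ i)

/-- The gradient `∇ω̃(ξ)`, given by `(∇ω̃(ξ))_{(i,a)} = ξ_{(i,a)}/ω(ξ_i)`. -/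
def gradOmegaT {n d : ℕ} (m : ℝ) (ξ : Pt n d) : Pt n d :=
  (WithLp.equiv 2 ((Fin n × Fin d) → ℝ)).symm fun k => ξ k / omega1 m (blk ξ k.1)

def D0 (n d : ℕ) : Set (Pt n d) := {x | ∃ i j : Fin n, i ≠ j ∧ blk x i = blk x j}

def tball (n d : ℕ) (ε : ℝ) : Set (Pt n d) := {x | ∀ i : Fin n, ‖blk x i‖ < ε}

/-- The symbol `M(x,ξ) = χ(ε⁻²|x−∇ω̃(ξ)|²)·χ₁(∇ω̃(ξ))`. -/
def Msym {n d : ℕ} (m ε : ℝ) (χ : ℝ → ℝ) (χ₁ : Pt n d → ℝ) (x ξ : Pt n d) : ℝ :=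
  χ ((ε ^ 2)⁻¹ * ‖x - gradOmegaT m ξ‖ ^ 2) * χ₁ (gradOmegaT m ξ)

/-- `dM(x,ξ) = −(x−∇ω̃(ξ))·∇ₓM(x,ξ)`. -/
def dMsym {n d : ℕ} (m ε : ℝ) (χ : ℝ → ℝ) (χ₁ : Pt n d → ℝ) (x ξ : Pt n d) : ℝ :=
  -(inner ℝ (x - gradOmegaT m ξ) (gradient (fun x' => Msym m ε χ χ₁ x' ξ) x) : ℝ)

/-!
For (a): `∇ₓM = 2ε⁻² χ₁(∇ω̃(ξ)) χ'(s) (x - ∇ω̃(ξ))` with `s = ε⁻²|x - ∇ω̃(ξ)|²`, so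
`dM = -2ε⁻² χ₁(∇ω̃(ξ)) χ'(s) |x - ∇ω̃(ξ)|²`. This is nonnegative because `χ' ≤ 0` and `χ₁ ≥ 0`, and
on `B(0,ε) × K` we have `s ≤ 1`, `χ₁ = 1` and `χ'(s) ≤ -1/2`, giving `dM ≥ ε⁻²|x - ∇ω̃(ξ)|²`.

For (b): any two blocks of a point of `K` are at distance at least `2ε`. If `M(x,ξ) ≠ 0`, then
`∇ω̃(ξ) = k + w` with `k ∈ K`, `|w_i| < λ`, and `|x - ∇ω̃(ξ)| < ε(1+λ)`. Since two blocks of a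
vector `v` have total length at most `√2|v|`, the blocks of `x` stay at least
`2(ε-λ) - √2ε(1+λ) > 0` apart. This condition is closed, so it also holds on `supp M`.
-/

theorem hasGradientAt_comp_const_mul_norm_sub_sq_mul {F : Type*} [NormedAddCommGroup F]
    [InnerProductSpace ℝ F] [CompleteSpace F] {χ : ℝ → ℝ} {a : ℝ} {g x : F}
    (hχ : DifferentiableAt ℝ χ (a * ‖x - g‖ ^ 2)) (c : ℝ) :
    HasGradientAt (fun y => χ (a * ‖y - g‖ ^ 2) * c)
      ((2 * a * c * deriv χ (a * ‖x - g‖ ^ 2)) • (x - g)) x := by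
  have hsq : HasFDerivAt (fun y : F => a * ‖y - g‖ ^ 2) (a • (2 • innerSL ℝ (x - g))) x :=
    (((hasStrictFDerivAt_norm_sq (x - g)).hasFDerivAt.comp x
      ((hasFDerivAt_id x).sub_const g))).const_mul a
  have h : HasFDerivAt (fun y => χ (a * ‖y - g‖ ^ 2) * c)
      (c • deriv χ (a * ‖x - g‖ ^ 2) • a • (2 • innerSL ℝ (x - g))) x :=
    (hχ.hasDerivAt.comp_hasFDerivAt x hsq).mul_const c
  rw [hasGradientAt_iff_hasFDerivAt]
  refine h.congr_fderiv ?_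
  ext v
  simp
  ring

section Symbol

variable {n d : ℕ}

theorem dMsym_eq {m ε : ℝ} {χ : ℝ → ℝ} (hχ : Differentiable ℝ χ) (χ₁ : Pt n d → ℝ)
    (x ξ : Pt n d) :
    dMsym m ε χ χ₁ x ξ = -(2 * (ε ^ 2)⁻¹ * χ₁ (gradOmegaT m ξ)
      * deriv χ ((ε ^ 2)⁻¹ * ‖x - gradOmegaT m ξ‖ ^ 2)) * ‖x - gradOmegaT m ξ‖ ^ 2 := by
  have h : HasGradientAt (fun x' => Msym m ε χ χ₁ x' ξ) _ x :=
    hasGradientAt_comp_const_mul_norm_sub_sq_mul (hχ _) _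
  rw [dMsym, h.gradient, real_inner_smul_right, real_inner_self_eq_norm_sq, neg_mul]

theorem indicator_mul_indicator_le_dMsym {m ε : ℝ} (hε : 0 < ε) {K : Set (Pt n d)} {χ : ℝ → ℝ}
    (hχ : Differentiable ℝ χ) (hχ' : ∀ s, deriv χ s ≤ 0)
    (hχ'' : ∀ s, 0 ≤ s → s ≤ 1 → deriv χ s ≤ -(1 / 2))
    {χ₁ : Pt n d → ℝ} (hχ₁0 : ∀ x, 0 ≤ χ₁ x) (hχ₁K : ∀ x ∈ K, χ₁ x = 1) (x ξ : Pt n d) :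
    (ε ^ 2)⁻¹ * (Metric.ball (0 : Pt n d) ε).indicator (fun _ => (1:ℝ)) (x - gradOmegaT m ξ)
        * K.indicator (fun _ => (1:ℝ)) (gradOmegaT m ξ) * ‖x - gradOmegaT m ξ‖ ^ 2
      ≤ dMsym m ε χ χ₁ x ξ := by
  rw [dMsym_eq hχ]
  set g := gradOmegaT m ξ
  set s := (ε ^ 2)⁻¹ * ‖x - g‖ ^ 2
  by_cases hmem : x - g ∈ Metric.ball 0 ε ∧ g ∈ K
  · obtain ⟨hball, hK⟩ := hmem
    have hs1 : s ≤ 1 := by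
      rw [mem_ball_zero_iff] at hball
      rw [inv_mul_le_one₀ (by positivity)]
      gcongr
    have := hχ'' s (by positivity) hs1
    rw [indicator_of_mem hball, indicator_of_mem hK, hχ₁K g hK]
    nlinarith [mul_nonneg (inv_pos.2 (pow_pos hε 2)).le (sq_nonneg ‖x - g‖)]
  · have hdM : 0 ≤ -(2 * (ε ^ 2)⁻¹ * χ₁ g * deriv χ s) * ‖x - g‖ ^ 2 := by
      rw [neg_mul, neg_nonneg]
      exact mul_nonpos_of_nonpos_of_nonneg
        (mul_nonpos_of_nonneg_of_nonpos (by positivity [hχ₁0 g]) (hχ' s)) (sq_nonneg _)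
    rcases not_and_or.1 hmem with h | h <;> simpa [indicator_of_notMem h] using hdM

end Symbol

section Blocks

variable {n d : ℕ}

def ofBlk (f : Fin n → Vec (Fin d)) : Pt n d :=
  (WithLp.equiv 2 ((Fin n × Fin d) → ℝ)).symm fun k => f k.1 k.2

@[simp]
theorem blk_ofBlk (f : Fin n → Vec (Fin d)) (i : Fin n) : blk (ofBlk f) i = f i := rfl

theorem blk_add (x y : Pt n d) (i : Fin n) : blk (x + y) i = blk x i + blk y i := rfl

theorem continuous_blk (i : Fin n) : Continuous fun x : Pt n d => blk x i :=
  (PiLp.continuous_toLp 2 _).comp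
    (continuous_pi fun a => (continuous_apply (i, a)).comp (PiLp.continuous_ofLp 2 _))

theorem norm_blk_add_norm_blk_le (v : Pt n d) {i j : Fin n} (hij : i ≠ j) :
    ‖blk v i‖ + ‖blk v j‖ ≤ Real.sqrt 2 * ‖v‖ := by
  have hblk : ∀ l, ‖blk v l‖ ^ 2 = ∑ a : Fin d, v (l, a) ^ 2 := fun l => by
    rw [EuclideanSpace.norm_sq_eq]
    simp [blk]
  have hv : ‖v‖ ^ 2 = ∑ l : Fin n, ∑ a : Fin d, v (l, a) ^ 2 := by
    rw [EuclideanSpace.norm_sq_eq, Fintype.sum_prod_type]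
    simp
  have hpair : ‖blk v i‖ ^ 2 + ‖blk v j‖ ^ 2 ≤ ‖v‖ ^ 2 := by
    have hsub := Finset.sum_le_sum_of_subset_of_nonneg (Finset.subset_univ {i, j})
      fun l _ _ => (by positivity : 0 ≤ ∑ a : Fin d, v (l, a) ^ 2)
    rwa [Finset.sum_pair hij, ← hblk, ← hblk, ← hv] at hsub
  rw [← Real.sqrt_sq (by positivity : 0 ≤ ‖blk v i‖ + ‖blk v j‖), ← Real.sqrt_sq (norm_nonneg v),
    ← Real.sqrt_mul zero_le_two]
  gcongr
  nlinarith [sq_nonneg (‖blk v i‖ - ‖blk v j‖)]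

def pairSep (n d : ℕ) (δ : ℝ) : Set (Pt n d) :=
  {x | ∀ i j, i ≠ j → δ ≤ ‖blk x i - blk x j‖}

theorem isClosed_pairSep (δ : ℝ) : IsClosed (pairSep n d δ) := by
  simp only [pairSep, ofPred_forall]
  exact isClosed_iInter fun i => isClosed_iInter fun j => isClosed_iInter fun _ =>
    isClosed_le continuous_const ((continuous_blk i).sub (continuous_blk j)).norm

theorem disjoint_pairSep_D0 {δ : ℝ} (hδ : 0 < δ) : Disjoint (pairSep n d δ) (D0 n d) := by
  refine disjoint_left.2 fun x hx ⟨i, j, hij, hxij⟩ => ?_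
  have := hx i j hij
  rw [hxij, sub_self, norm_zero] at this
  linarith

theorem add_mem_pairSep {δ r : ℝ} {x u : Pt n d} (hx : x ∈ pairSep n d δ)
    (hu : ∀ i j, i ≠ j → ‖blk u i‖ + ‖blk u j‖ ≤ r) : x + u ∈ pairSep n d (δ - r) := by
  intro i j hij
  have hsplit : blk (x + u) i - blk (x + u) j = (blk x i - blk x j) - (blk u j - blk u i) := by
    rw [blk_add, blk_add]
    abel
  rw [hsplit]
  linarith [norm_sub_norm_le (blk x i - blk x j) (blk u j - blk u i),
    norm_sub_le (blk u j) (blk u i), hx i j hij, hu i j hij]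

theorem subset_pairSep_of_disjoint_add_tball {K : Set (Pt n d)} {ε : ℝ} (hε : 0 < ε)
    (hKD : Disjoint (K + tball n d ε) (D0 n d)) : K ⊆ pairSep n d (2 * ε) := by
  intro k hk i j hij
  -- otherwise moving the `i`-th and `j`-th blocks of `k` to their midpoint is a perturbation in
  -- `tball n d ε` that lands in `D0 n d`
  by_contra! hlt
  set u : Pt n d := ofBlk fun l => if l = i then (2:ℝ)⁻¹ • (blk k j - blk k i)
    else if l = j then (2:ℝ)⁻¹ • (blk k i - blk k j) else 0
  have hu : u ∈ tball n d ε := by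
    intro l
    simp only [u, blk_ofBlk]
    split_ifs
    · rw [norm_smul, norm_sub_rev]
      norm_num
      linarith
    · rw [norm_smul]
      norm_num
      linarith
    · simpa using hε
  refine disjoint_left.1 hKD (add_mem_add hk hu) ⟨i, j, hij, ?_⟩
  simp [u, blk_add, hij.symm]
  module

end Blocks

theorem mem_pairSep_of_Msym_ne_zero {n d : ℕ} {m ε lam : ℝ} {K : Set (Pt n d)}
    {χ : ℝ → ℝ} {χ₁ : Pt n d → ℝ} (hε : 0 < ε) (hlam : 0 < lam)
    (hKD : Disjoint (K + tball n d ε) (D0 n d))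
    (hχ0 : ∀ s, (1 + lam) ^ 2 ≤ s → χ s = 0) (hχ₁supp : tsupport χ₁ ⊆ K + tball n d lam)
    {x ξ : Pt n d} (hM : Msym m ε χ χ₁ x ξ ≠ 0) :
    x ∈ pairSep n d (2 * (ε - lam) - Real.sqrt 2 * ε * (1 + lam)) := by
  obtain ⟨hχx, hχ₁g⟩ := mul_ne_zero_iff.1 hM
  obtain ⟨k, hk, w, hw, hkw : k + w = gradOmegaT m ξ⟩ := hχ₁supp (subset_tsupport _ hχ₁g)
  set v := x - gradOmegaT m ξ
  have hv : ‖v‖ < ε * (1 + lam) := by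
    have hs : (ε ^ 2)⁻¹ * ‖v‖ ^ 2 < (1 + lam) ^ 2 := lt_of_not_ge fun h => hχx (hχ0 _ h)
    rw [inv_mul_lt_iff₀ (by positivity), ← mul_pow] at hs
    exact lt_of_pow_lt_pow_left₀ 2 (by positivity) hs
  have hx : x = k + (w + v) := by
    rw [← add_assoc, hkw, add_sub_cancel]
  have hsep := add_mem_pairSep (subset_pairSep_of_disjoint_add_tball hε hKD hk)
    (u := w + v) (r := 2 * lam + Real.sqrt 2 * (ε * (1 + lam))) fun i j hij => by
      rw [blk_add, blk_add]
      linarith [norm_add_le (blk w i) (blk v i), norm_add_le (blk w j) (blk v j), hw i, hw j,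
        norm_blk_add_norm_blk_le v hij, mul_le_mul_of_nonneg_left hv.le (Real.sqrt_nonneg 2)]
  rw [hx]
  convert hsep using 2
  ring

theorem statement17_general (m : ℝ) (n d : ℕ)
    (K : Set (Pt n d)) (ε : ℝ) (hε : 0 < ε)
    (hKD : K + tball n d ε ⊆ tball n d 1 \ D0 n d)
    (lam : ℝ) (hlam : 0 < lam)
    (hlam2 : Real.sqrt 2 * ε * (1 + lam) < 2 * (ε - lam))
    (χ : ℝ → ℝ) (hχsm : ContDiff ℝ (⊤ : ℕ∞) χ)
    (hχ0 : ∀ s : ℝ, (1 + lam) ^ 2 ≤ s → χ s = 0)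
    (hχ' : ∀ s : ℝ, deriv χ s ≤ 0)
    (hχ'' : ∀ s : ℝ, 0 ≤ s → s ≤ 1 → deriv χ s ≤ -(1 / 2))
    (χ₁ : Pt n d → ℝ)
    (hχ₁0 : ∀ x, 0 ≤ χ₁ x)
    (hχ₁K : ∀ x ∈ K, χ₁ x = 1)
    (hχ₁supp : tsupport χ₁ ⊆ K + tball n d lam) :
    (∃ c : ℝ, 0 < c ∧ ∀ x ξ : Pt n d,
      c * (Metric.ball (0 : Pt n d) ε).indicator (fun _ => (1:ℝ)) (x - gradOmegaT m ξ)
          * K.indicator (fun _ => (1:ℝ)) (gradOmegaT m ξ)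
          * ‖x - gradOmegaT m ξ‖ ^ 2
        ≤ dMsym m ε χ χ₁ x ξ) ∧
    {x : Pt n d | ∃ ξ : Pt n d,
        (x, ξ) ∈ tsupport (fun p : Pt n d × Pt n d => Msym m ε χ χ₁ p.1 p.2)}
      ∩ D0 n d = ∅ := by
  have hχ : Differentiable ℝ χ := hχsm.differentiable (by simp)
  refine ⟨⟨(ε ^ 2)⁻¹, by positivity,
    indicator_mul_indicator_le_dMsym (m := m) hε hχ hχ' hχ'' hχ₁0 hχ₁K⟩, ?_⟩
  have hKD' : Disjoint (K + tball n d ε) (D0 n d) := disjoint_sdiff_left.mono_left hKD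
  have hsupp : tsupport (fun p : Pt n d × Pt n d => Msym m ε χ χ₁ p.1 p.2)
      ⊆ Prod.fst ⁻¹' pairSep n d (2 * (ε - lam) - Real.sqrt 2 * ε * (1 + lam)) :=
    closure_minimal (fun p hp => mem_pairSep_of_Msym_ne_zero (x := p.1) (ξ := p.2) hε hlam hKD'
      hχ0 hχ₁supp (Function.mem_support.1 hp)) ((isClosed_pairSep _).preimage continuous_fst)
  have hsep : Disjoint (pairSep n d (2 * (ε - lam) - Real.sqrt 2 * ε * (1 + lam))) (D0 n d) :=
    disjoint_pairSep_D0 (sub_pos.2 hlam2)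
  rw [← disjoint_iff_inter_eq_empty]
  exact hsep.mono_left fun x ⟨ξ, hxξ⟩ => hsupp (a := (x, ξ)) hxξ

theorem statement17 (m : ℝ) (hm : 0 < m) (n d : ℕ) (hd : 1 ≤ d) (hn : 2 ≤ n)
    (K : Set (Pt n d)) (hK : IsCompact K) (ε : ℝ) (hε : 0 < ε)
    (hKD : K + tball n d ε ⊆ tball n d 1 \ D0 n d)
    (lam : ℝ) (hlam : 0 < lam)
    (hlam2 : Real.sqrt 2 * ε * (1 + lam) < 2 * (ε - lam))
    (χ : ℝ → ℝ) (hχsm : ContDiff ℝ (⊤ : ℕ∞) χ)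
    (hχ1 : ∀ s : ℝ, s ≤ -1 → χ s = 1)
    (hχ0 : ∀ s : ℝ, (1 + lam) ^ 2 ≤ s → χ s = 0)
    (hχ' : ∀ s : ℝ, deriv χ s ≤ 0)
    (hχ'' : ∀ s : ℝ, 0 ≤ s → s ≤ 1 → deriv χ s ≤ -(1 / 2))
    (χ₁ : Pt n d → ℝ) (hχ₁sm : ContDiff ℝ (⊤ : ℕ∞) χ₁) (hχ₁cs : HasCompactSupport χ₁)
    (hχ₁0 : ∀ x, 0 ≤ χ₁ x) (hχ₁1 : ∀ x, χ₁ x ≤ 1)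
    (hχ₁K : ∀ x ∈ K, χ₁ x = 1)
    (hχ₁supp : tsupport χ₁ ⊆ K + tball n d lam) :
    (∃ c : ℝ, 0 < c ∧ ∀ x ξ : Pt n d,
      c * (Metric.ball (0 : Pt n d) ε).indicator (fun _ => (1:ℝ)) (x - gradOmegaT m ξ)
          * K.indicator (fun _ => (1:ℝ)) (gradOmegaT m ξ)
          * ‖x - gradOmegaT m ξ‖ ^ 2
        ≤ dMsym m ε χ χ₁ x ξ) ∧
    {x : Pt n d | ∃ ξ : Pt n d,
        (x, ξ) ∈ tsupport (fun p : Pt n d × Pt n d => Msym m ε χ χ₁ p.1 p.2)}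
      ∩ D0 n d = ∅ :=
  statement17_general m n d K ε hε hKD lam hlam hlam2 χ hχsm hχ0 hχ' hχ'' χ₁ hχ₁0 hχ₁K hχ₁supp
end
end
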